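/- arXiv:1107.1505 — 3 statements merged into one kernel-verified Lean document; each statement's English description precedes it below -/
import Mathlib

section
/- Let A ∈ B(H,K) and let W be a closed subspace of H with W ∩ ker(A) = {0}. If V ⊆ W is a closed subspace on which A is bounded below, then dim(W ⊖ V) = dim( closure(A(W)) ⊖ A(V) ). -/
/-!
The compression `P_M ∘ A : W ⊖ V → M := closure (A W) ⊖ A V` is injective, because `A V` is closed,
so that `closure (A W) = A V ⊕ M`, and `W ∩ ker A = 0`; it has dense range because
`W = V ⊕ (W ⊖ V)`. An injective operator with dense range preserves Hilbert dimension, since it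
and its adjoint both have dense range, and an operator with dense range cannot raise Hilbert
dimension: in infinite dimension because the image of a Hilbert basis is total and each of its
vectors meets only countably many members of an orthonormal set, in finite dimension because the
range is closed.
-/

/-- The Hilbert dimension of an inner product space: the supremum of cardinalities of
orthonormal subsets. -/
noncomputable def hdim (𝕜 E : Type*) [RCLike 𝕜] [NormedAddCommGroup E]
    [InnerProductSpace 𝕜 E] : Cardinal :=
  ⨆ s : {s : Set E // Orthonormal 𝕜 (fun x : s => (x : E))}, Cardinal.mk s.1

universe u

open scoped InnerProductSpace InnerProduct
open Cardinal

section

variable {𝕜 E F : Type*} [RCLike 𝕜] [NormedAddCommGroup E] [InnerProductSpace 𝕜 E]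
  [NormedAddCommGroup F] [InnerProductSpace 𝕜 F]

theorem Orthonormal.countable_inner_ne_zero {ι : Type*} {v : ι → E} (hv : Orthonormal 𝕜 v)
    (x : E) : {i | ⟪v i, x⟫_𝕜 ≠ 0}.Countable := by
  simpa [Function.support] using (hv.inner_products_summable x).countable_support

theorem eq_zero_of_forall_inner_eq_zero_of_dense_span {ι : Type*} {v : ι → E}
    (hv : Dense (Submodule.span 𝕜 (Set.range v) : Set E)) {x : E} (hx : ∀ i, ⟪x, v i⟫_𝕜 = 0) :
    x = 0 := by
  have : innerSL 𝕜 x = 0 :=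
    ContinuousLinearMap.ext_on hv (by rintro _ ⟨i, rfl⟩; simpa using hx i)
  simpa using congr($this x)

theorem ContinuousLinearMap.denseRange_of_forall_inner_eq_zero [CompleteSpace F] {T : E →L[𝕜] F}
    (h : ∀ y, (∀ x, ⟪T x, y⟫_𝕜 = 0) → y = 0) : DenseRange T := by
  rw [DenseRange, ← T.coe_coe, ← LinearMap.coe_range,
    Submodule.dense_iff_topologicalClosure_eq_top, Submodule.topologicalClosure_eq_top_iff,
    Submodule.eq_bot_iff]
  exact fun y hy => h y fun x => hy _ ⟨x, rfl⟩

theorem ContinuousLinearMap.denseRange_adjoint_of_injective [CompleteSpace E] [CompleteSpace F]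
    {T : E →L[𝕜] F} (hT : Function.Injective T) : DenseRange (T†) := by
  have h : (T†).range.topologicalClosure = ⊤ := by
    rw [← T.orthogonal_ker, LinearMap.ker_eq_bot.2 hT, Submodule.bot_orthogonal_eq_top]
  exact Submodule.dense_iff_topologicalClosure_eq_top.2 h

theorem Submodule.orthogonal_orthogonal_inf_inf_eq_of_le {K₁ K₂ : Submodule 𝕜 E} (h : K₁ ≤ K₂)
    [K₁.HasOrthogonalProjection] : (K₁ᗮ ⊓ K₂)ᗮ ⊓ K₂ = K₁ := by
  refine le_antisymm (fun z ⟨hz, hzK₂⟩ => ?_)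
    (le_inf (K₁.le_orthogonal_orthogonal.trans (orthogonal_le inf_le_left)) h)
  rw [← sup_orthogonal_inf_of_hasOrthogonalProjection h] at hzK₂
  obtain ⟨a, ha, m, hm, rfl⟩ := mem_sup.1 hzK₂
  have hm' : m ∈ (K₁ᗮ ⊓ K₂)ᗮ :=
    (add_mem_cancel_left (K₁.le_orthogonal_orthogonal.trans (orthogonal_le inf_le_left) ha)).1 hz
  have hm0 : m = 0 := by
    simpa [(K₁ᗮ ⊓ K₂).inf_orthogonal_eq_bot] using mem_inf.2 ⟨hm, hm'⟩
  simpa [hm0] using ha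

theorem Orthonormal.mk_le_hdim {s : Set E} (hs : Orthonormal 𝕜 (Subtype.val : s → E)) :
    #s ≤ hdim 𝕜 E :=
  le_ciSup bddAbove_of_small (⟨s, hs⟩ : {s : Set E // Orthonormal 𝕜 (Subtype.val : s → E)})

theorem hdim_le {κ : Cardinal} (h : ∀ s : Set E, Orthonormal 𝕜 (Subtype.val : s → E) → #s ≤ κ) :
    hdim 𝕜 E ≤ κ :=
  ciSup_le' fun s => h s.1 s.2

theorem hdim_eq_finrank [FiniteDimensional 𝕜 E] : hdim 𝕜 E = Module.finrank 𝕜 E := by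
  refine le_antisymm (hdim_le fun s hs => ?_) ?_
  · rw [Module.finrank_eq_rank]
    exact hs.linearIndependent.cardinal_le_rank
  · set b := stdOrthonormalBasis 𝕜 E
    have hinj : Function.Injective b := b.orthonormal.linearIndependent.injective
    have hcard : #(Set.range b) = Module.finrank 𝕜 E := by
      simpa using mk_range_eq_of_injective hinj
    exact hcard ▸ b.orthonormal.toSubtypeRange.mk_le_hdim

theorem finiteDimensional_of_hdim_lt_aleph0 [CompleteSpace E] (h : hdim 𝕜 E < ℵ₀) :
    FiniteDimensional 𝕜 E := by
  obtain ⟨w, b, hb⟩ := exists_hilbertBasis 𝕜 E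
  have : Finite w := lt_aleph0_iff_finite.mp <| ((hb ▸ b.orthonormal).mk_le_hdim).trans_lt h
  have := Fintype.ofFinite w
  exact b.toOrthonormalBasis.toBasis.finiteDimensional_of_finite

end

section

variable {𝕜 : Type*} {E F : Type u} [RCLike 𝕜] [NormedAddCommGroup E] [InnerProductSpace 𝕜 E]
  [NormedAddCommGroup F] [InnerProductSpace 𝕜 F]

theorem Orthonormal.mk_le_mul_aleph0 {ι : Type u} {v : ι → E}
    (hv : Dense (Submodule.span 𝕜 (Set.range v) : Set E)) {s : Set E}
    (hs : Orthonormal 𝕜 (Subtype.val : s → E)) : #s ≤ #ι * ℵ₀ := by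
  let S : ι → Set s := fun i => {x | ⟪(x : E), v i⟫_𝕜 ≠ 0}
  have hcover : ⋃ i, S i = Set.univ := by
    refine Set.eq_univ_of_forall fun x => Set.mem_iUnion.2 ?_
    by_contra! h
    exact hs.ne_zero x (eq_zero_of_forall_inner_eq_zero_of_dense_span hv fun i => not_not.1 (h i))
  have hcount : ∀ i, #(S i) ≤ ℵ₀ := fun i => by
    refine Set.Countable.le_aleph0 ?_
    simpa [S, ← inner_conj_symm (v i)] using hs.countable_inner_ne_zero (v i)
  calc #s = #(⋃ i, S i) := by rw [hcover, mk_univ]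
    _ ≤ #ι * ⨆ i, #(S i) := mk_iUnion_le S
    _ ≤ #ι * ℵ₀ := by gcongr; exact ciSup_le' hcount

theorem hdim_le_max_aleph0_of_denseRange [CompleteSpace E] {T : E →L[𝕜] F} (hT : DenseRange T) :
    hdim 𝕜 F ≤ max (hdim 𝕜 E) ℵ₀ := by
  obtain ⟨w, b, hb⟩ := exists_hilbertBasis 𝕜 E
  have hspan : Dense (Submodule.span 𝕜 (Set.range (T ∘ b)) : Set F) := by
    rw [Set.range_comp, ← T.coe_coe, ← Submodule.map_span, Submodule.map_coe, T.coe_coe]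
    exact hT.dense_image T.continuous (Submodule.dense_iff_topologicalClosure_eq_top.2 b.dense_span)
  refine hdim_le fun s hs => (hs.mk_le_mul_aleph0 hspan).trans ?_
  calc #w * ℵ₀ ≤ max (max #w ℵ₀) ℵ₀ := mul_le_max _ _
    _ ≤ max (hdim 𝕜 E) ℵ₀ := by
      rw [max_assoc, max_self]
      exact max_le_max_right _ (hb ▸ b.orthonormal).mk_le_hdim

theorem hdim_le_of_denseRange [CompleteSpace E] {T : E →L[𝕜] F} (hT : DenseRange T) :
    hdim 𝕜 F ≤ hdim 𝕜 E := by
  rcases lt_or_ge (hdim 𝕜 E) ℵ₀ with hE | hE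
  · have := finiteDimensional_of_hdim_lt_aleph0 hE
    have hrange : LinearMap.range (T : E →ₗ[𝕜] F) = ⊤ := by
      rw [← (LinearMap.range _).closed_of_finiteDimensional.submodule_topologicalClosure_eq,
        ← Submodule.dense_iff_topologicalClosure_eq_top, LinearMap.coe_range]
      exact hT
    have hsurj : Function.Surjective T := LinearMap.range_eq_top.1 hrange
    have : FiniteDimensional 𝕜 F := Module.Finite.of_surjective (T : E →ₗ[𝕜] F) hsurj
    rw [hdim_eq_finrank, hdim_eq_finrank]
    exact_mod_cast LinearMap.finrank_le_finrank_of_surjective hsurj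
  · exact (hdim_le_max_aleph0_of_denseRange hT).trans_eq (max_eq_left hE)

theorem hdim_eq_of_injective_of_denseRange [CompleteSpace E] [CompleteSpace F] {T : E →L[𝕜] F}
    (hinj : Function.Injective T) (hT : DenseRange T) : hdim 𝕜 E = hdim 𝕜 F :=
  le_antisymm (hdim_le_of_denseRange (T.denseRange_adjoint_of_injective hinj))
    (hdim_le_of_denseRange hT)

end

section RelativeComplement

variable {𝕜 H K : Type*} [RCLike 𝕜] [NormedAddCommGroup H] [InnerProductSpace 𝕜 H]
  [NormedAddCommGroup K] [InnerProductSpace 𝕜 K] (A : H →L[𝕜] K) {V W : Submodule 𝕜 H}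

theorem Submodule.isClosed_map_of_bound [CompleteSpace V] {c : ℝ} (hc : 0 < c)
    (hbound : ∀ x ∈ V, c * ‖x‖ ≤ ‖A x‖) : IsClosed (V.map (A : H →ₗ[𝕜] K) : Set K) := by
  have hanti : AntilipschitzWith c.toNNReal⁻¹ (A ∘L V.subtypeL) :=
    ContinuousLinearMap.antilipschitz_of_bound _ fun x => by
      rw [NNReal.coe_inv, Real.coe_toNNReal _ hc.le, le_inv_mul_iff₀ hc]
      exact hbound x x.2
  have := hanti.isClosed_range (A ∘L V.subtypeL).uniformContinuous
  rwa [ContinuousLinearMap.coe_comp, Set.range_comp, Submodule.coe_subtypeL,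
    Submodule.coe_subtype, Subtype.range_coe] at this

theorem eq_zero_of_apply_mem_orthogonal_relative_complement (hVW : V ≤ W)
    (hker : W ⊓ LinearMap.ker (A : H →ₗ[𝕜] K) = ⊥)
    [(V.map (A : H →ₗ[𝕜] K)).HasOrthogonalProjection]
    {x : H} (hx : x ∈ Vᗮ ⊓ W)
    (hAx : A x ∈ ((V.map (A : H →ₗ[𝕜] K))ᗮ ⊓ (W.map (A : H →ₗ[𝕜] K)).topologicalClosure)ᗮ) :
    x = 0 := by
  have hAV : A x ∈ V.map (A : H →ₗ[𝕜] K) := by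
    rw [← Submodule.orthogonal_orthogonal_inf_inf_eq_of_le
      ((Submodule.map_mono hVW).trans (Submodule.le_topologicalClosure _))]
    exact ⟨hAx, Submodule.le_topologicalClosure _ ⟨x, hx.2, rfl⟩⟩
  obtain ⟨v, hv, hvx⟩ := hAV
  have hxv : x - v ∈ W ⊓ LinearMap.ker (A : H →ₗ[𝕜] K) :=
    ⟨sub_mem hx.2 (hVW hv), by simp [← hvx]⟩
  rw [hker, Submodule.mem_bot, sub_eq_zero] at hxv
  subst hxv
  simpa [V.inf_orthogonal_eq_bot] using Submodule.mem_inf.2 ⟨hv, hx.1⟩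

theorem eq_zero_of_inner_apply_relative_complement (hVW : V ≤ W) [V.HasOrthogonalProjection]
    {y : K} (hy : y ∈ (V.map (A : H →ₗ[𝕜] K))ᗮ ⊓ (W.map (A : H →ₗ[𝕜] K)).topologicalClosure)
    (h : ∀ x ∈ Vᗮ ⊓ W, ⟪A x, y⟫_𝕜 = 0) : y = 0 := by
  have hyW : y ∈ (W.map (A : H →ₗ[𝕜] K)).topologicalClosureᗮ := by
    rw [Submodule.orthogonal_closure]
    rintro _ ⟨w, hw, rfl⟩
    rw [← Submodule.sup_orthogonal_inf_of_hasOrthogonalProjection hVW] at hw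
    obtain ⟨v, hv, e, he, rfl⟩ := Submodule.mem_sup.1 hw
    have hAv : ⟪A v, y⟫_𝕜 = 0 := hy.1 _ ⟨v, hv, rfl⟩
    simp [inner_add_left, hAv, h e he]
  have := Submodule.mem_inf.2 ⟨hy.2, hyW⟩
  rwa [Submodule.inf_orthogonal_eq_bot, Submodule.mem_bot] at this

end RelativeComplement

/-- If `W` is a closed subspace of `H` with `W ∩ ker A = {0}` and `V ⊆ W` is a closed
subspace on which `A` is bounded below, then
`dim (W ⊖ V) = dim (closure (A(W)) ⊖ A(V))`. -/
theorem hdim_relative_complement_eq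
    {H K : Type u} [NormedAddCommGroup H] [InnerProductSpace ℂ H] [CompleteSpace H]
    [NormedAddCommGroup K] [InnerProductSpace ℂ K] [CompleteSpace K]
    (A : H →L[ℂ] K)
    (W : Submodule ℂ H) (hW : IsClosed (W : Set H))
    (hker : W ⊓ LinearMap.ker A.toLinearMap = ⊥)
    (V : Submodule ℂ H) (hVW : V ≤ W) (hVclosed : IsClosed (V : Set H))
    (c : ℝ) (hc : 0 < c) (hbb : ∀ x ∈ V, c * ‖x‖ ≤ ‖A x‖) :
    hdim ℂ ↥(Vᗮ ⊓ W)
      = hdim ℂ ↥((Submodule.map A.toLinearMap V)ᗮ ⊓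
          (Submodule.map A.toLinearMap W).topologicalClosure) := by
  have : CompleteSpace V := hVclosed.completeSpace_coe
  have : CompleteSpace (V.map A.toLinearMap) :=
    (V.isClosed_map_of_bound A hc hbb).completeSpace_coe
  set M := (V.map A.toLinearMap)ᗮ ⊓ (W.map A.toLinearMap).topologicalClosure
  have : CompleteSpace ↥(Vᗮ ⊓ W) := (V.isClosed_orthogonal.inter hW).completeSpace_coe
  have : CompleteSpace M :=
    ((Submodule.isClosed_orthogonal _).inter
      (Submodule.isClosed_topologicalClosure _)).completeSpace_coe
  let T : ↥(Vᗮ ⊓ W) →L[ℂ] M := M.orthogonalProjectionOnto ∘L A ∘L (Vᗮ ⊓ W).subtypeL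
  refine hdim_eq_of_injective_of_denseRange (T := T) ?_ ?_
  · refine (injective_iff_map_eq_zero T).2 fun x hx => Subtype.ext ?_
    exact eq_zero_of_apply_mem_orthogonal_relative_complement A hVW hker x.2
      (M.orthogonalProjectionOnto_eq_zero_iff.1 hx)
  · refine ContinuousLinearMap.denseRange_of_forall_inner_eq_zero fun y hy => Subtype.ext ?_
    refine eq_zero_of_inner_apply_relative_complement A hVW y.2 fun x hx => ?_
    simpa [T] using hy ⟨x, hx⟩
end

section
/- Let A ∈ B₊(H), B ∈ B₊(H), and let E be the spectral measure of B. Then B belongs to 𝓛₊(A) (the norm closure of {X ∈ B₊(H) : X ≤ cA, some c > 0}) if and only if the spectral projection E([1/n, ∞)) belongs to 𝓛₊(A) for every n ≥ 1. -/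
/-!
`𝓛₊(A)` is stable under `X ↦ X W X` for every `W ≥ 0`, because `X W X ≤ ‖W‖ X² ≤ ‖W‖ ‖X‖ X`;
by continuity so is its closure. If `B` lies in the closure, then so does `P = B W B`, where
`W = (T⁻¹)* P T⁻¹` and `T = B P + (1/n) (1 - P) ≥ 1/n` is invertible and agrees with `B` on the
range of `P`. Conversely, if `P` lies in the closure, then so does `B P = P B P`, and
`‖B - B P‖ = ‖B (1 - P)‖ ≤ 1/n`.
-/

variable {H : Type*} [NormedAddCommGroup H] [InnerProductSpace ℂ H] [CompleteSpace H]

/-- `L₊(A)`: the cone of nonnegative operators dominated by a positive multiple of `A`. -/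
def Lplus (A : H →L[ℂ] H) : Set (H →L[ℂ] H) :=
  {B | B.IsPositive ∧ ∃ c : ℝ, 0 < c ∧ (c • A - B).IsPositive}

lemma IsStarProjection.star_mul_mul_eq_mul_of_commute {R : Type*} [Semigroup R] [Star R]
    {b p : R} (hp : IsStarProjection p) (hbp : Commute b p) : star p * b * p = b * p := by
  rw [hp.isSelfAdjoint.star_eq, ← hbp.eq, mul_assoc, hp.isIdempotentElem.eq]

section CStarAlgebra

variable {𝒜 : Type*} [CStarAlgebra 𝒜] [PartialOrder 𝒜] [StarOrderedRing 𝒜]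

lemma CStarAlgebra.mul_self_le_norm_smul_self {a : 𝒜} (ha : 0 ≤ a) : a * a ≤ ‖a‖ • a := by
  obtain ⟨s, hs, rfl⟩ : ∃ s : 𝒜, IsSelfAdjoint s ∧ s * s = a :=
    ⟨CFC.sqrt a, .of_nonneg (CFC.sqrt_nonneg a), CFC.sqrt_mul_sqrt_self a ha⟩
  have h := CStarAlgebra.star_left_conjugate_le_norm_smul (a := s) (b := s * s) (.of_nonneg ha)
  simpa only [hs.star_eq, mul_assoc] using h

lemma exists_nonneg_mul_mul_eq_of_smul_le_mul {b p : 𝒜} (hb : IsSelfAdjoint b)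
    (hp : IsStarProjection p) (hbp : Commute b p) {r : ℝ} (hr : 0 < r)
    (hlow : r • p ≤ b * p) : ∃ w, 0 ≤ w ∧ b * w * b = p := by
  have hrt : algebraMap ℝ 𝒜 r ≤ b * p + r • (1 - p) := by
    calc algebraMap ℝ 𝒜 r = r • p + r • (1 - p) := by
          rw [← smul_add, add_sub_cancel, Algebra.algebraMap_eq_smul_one]
      _ ≤ b * p + r • (1 - p) := add_le_add_left hlow _
  obtain ⟨u, hu⟩ := CStarAlgebra.isUnit_of_le _ hrt (isStrictlyPositive_algebraMap hr)
  have hup : (u : 𝒜) * p = b * p := by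
    rw [hu, add_mul, smul_mul_assoc, sub_mul, one_mul, hp.isIdempotentElem.eq, sub_self,
      smul_zero, add_zero, mul_assoc, hp.isIdempotentElem.eq]
  have hpu : Commute p u := hu ▸
    (hbp.symm.mul_right (.refl p)).add_right
      (((Commute.one_right p).sub_right (.refl p)).smul_right r)
  have hpub : p * ↑u⁻¹ * b = p := by
    calc p * ↑u⁻¹ * b = ↑u⁻¹ * (b * p) := by
          rw [(hpu.units_inv_right).eq, mul_assoc, hbp.eq]
      _ = p := by rw [← hup, ← mul_assoc, u.inv_mul, one_mul]
  have hbup : b * star ↑u⁻¹ * p = p := by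
    simpa only [star_mul, hb.star_eq, hp.isSelfAdjoint.star_eq, mul_assoc] using congr(star $hpub)
  refine ⟨star ↑u⁻¹ * p * ↑u⁻¹, star_left_conjugate_nonneg hp.nonneg _, ?_⟩
  calc b * (star ↑u⁻¹ * p * ↑u⁻¹) * b = (b * star ↑u⁻¹ * p) * (p * ↑u⁻¹ * b) := by
        conv_lhs => rw [← hp.isIdempotentElem.eq]
        simp only [mul_assoc]
    _ = p := by rw [hbup, hpub, hp.isIdempotentElem.eq]

lemma norm_sub_mul_le_of_mul_one_sub_le {b p : 𝒜} (hb : 0 ≤ b) (hp : IsStarProjection p)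
    (hbp : Commute b p) {r : ℝ} (hr : 0 ≤ r) (hhigh : b * (1 - p) ≤ r • (1 - p)) :
    ‖b - b * p‖ ≤ r := by
  have hq : Commute b (1 - p) := (Commute.one_right b).sub_right hbp
  have hbq : 0 ≤ b * (1 - p) :=
    hp.one_sub.star_mul_mul_eq_mul_of_commute hq ▸ star_left_conjugate_nonneg hb _
  rw [← mul_one_sub, CStarAlgebra.norm_le_iff_le_algebraMap _ hr hbq]
  calc b * (1 - p) ≤ r • (1 - p) := hhigh
    _ ≤ r • 1 := smul_le_smul_of_nonneg_left (sub_le_self _ hp.nonneg) hr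
    _ = algebraMap ℝ 𝒜 r := (Algebra.algebraMap_eq_smul_one r).symm

end CStarAlgebra

lemma mul_mul_self_mem_Lplus {A X W : H →L[ℂ] H} (hX : X ∈ Lplus A) (hW : 0 ≤ W) :
    X * W * X ∈ Lplus A := by
  obtain ⟨hX₀, c, hc, hXA : X ≤ c • A⟩ := hX
  rw [← X.nonneg_iff_isPositive] at hX₀
  have hXs : star X = X := hX₀.isSelfAdjoint.star_eq
  refine ⟨(X * W * X).nonneg_iff_isPositive.1 ?_, (‖W‖ * ‖X‖ + 1) * c, by positivity, ?_⟩
  · simpa only [hXs] using star_left_conjugate_nonneg hW X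
  show X * W * X ≤ _
  calc X * W * X ≤ ‖W‖ • (X * X) := by
        simpa only [hXs] using
          CStarAlgebra.star_left_conjugate_le_norm_smul (a := X) (.of_nonneg hW)
    _ ≤ ‖W‖ • (‖X‖ • X) := by
        gcongr; exact CStarAlgebra.mul_self_le_norm_smul_self hX₀
    _ ≤ ‖W‖ • (‖X‖ • (c • A)) := by gcongr
    _ ≤ ‖W‖ • (‖X‖ • (c • A)) + c • A := le_add_of_nonneg_right (hX₀.trans hXA)
    _ = ((‖W‖ * ‖X‖ + 1) * c) • A := by
        rw [smul_smul, smul_smul, add_mul, one_mul, add_smul, mul_assoc]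

lemma mul_mul_self_mem_closure_Lplus {A X W : H →L[ℂ] H} (hX : X ∈ closure (Lplus A))
    (hW : 0 ≤ W) : X * W * X ∈ closure (Lplus A) :=
  map_mem_closure (f := fun Y => Y * W * Y) (by fun_prop) hX fun _ hY =>
    mul_mul_self_mem_Lplus hY hW

open Filter Topology in
/-- `P n` plays the role of the spectral projection `E([1/n, ∞))` of `B`. -/
theorem mem_closure_Lplus_iff_spectral_projections_general (A B : H →L[ℂ] H)
    (hB : B.IsPositive)
    (P : ℕ → (H →L[ℂ] H))
    (hsa : ∀ n, 1 ≤ n → IsSelfAdjoint (P n))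
    (hidem : ∀ n, 1 ≤ n → (P n) ∘L (P n) = P n)
    (hcomm : ∀ n, 1 ≤ n → B ∘L P n = P n ∘L B)
    (hlow : ∀ n, 1 ≤ n → (B ∘L P n - ((n : ℝ)⁻¹) • P n).IsPositive)
    (hhigh : ∀ n, 1 ≤ n → (((n : ℝ)⁻¹) • (1 - P n) - B ∘L (1 - P n)).IsPositive) :
    B ∈ closure (Lplus A) ↔ ∀ n, 1 ≤ n → P n ∈ closure (Lplus A) := by
  have hB₀ : 0 ≤ B := (B.nonneg_iff_isPositive).2 hB
  have hP : ∀ n, 1 ≤ n → IsStarProjection (P n) := fun n hn => ⟨hidem n hn, hsa n hn⟩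
  constructor
  · intro hBA n hn
    obtain ⟨w, hw, hBwB⟩ := exists_nonneg_mul_mul_eq_of_smul_le_mul hB₀.isSelfAdjoint (hP n hn)
      (hcomm n hn) (by positivity) (hlow n hn)
    exact hBwB ▸ mul_mul_self_mem_closure_Lplus hBA hw
  · intro hPA
    have hBP : ∀ n : ℕ, B * P (n + 1) ∈ closure (Lplus A) := fun n => by
      have hPn := hP _ n.succ_pos
      rw [← hPn.star_mul_mul_eq_mul_of_commute (hcomm _ n.succ_pos), hPn.isSelfAdjoint.star_eq]
      exact mul_mul_self_mem_closure_Lplus (hPA _ n.succ_pos) hB₀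
    have hlim : Tendsto (fun n : ℕ => B * P (n + 1)) atTop (𝓝 B) := by
      rw [tendsto_iff_norm_sub_tendsto_zero]
      refine squeeze_zero_norm (fun n => ?_) tendsto_one_div_add_atTop_nhds_zero_nat
      rw [norm_norm, norm_sub_rev, one_div]
      exact_mod_cast norm_sub_mul_le_of_mul_one_sub_le hB₀ (hP _ n.succ_pos)
        (hcomm _ n.succ_pos) (by positivity) (hhigh _ n.succ_pos)
    exact isClosed_closure.mem_of_tendsto hlim (Eventually.of_forall hBP)

/-- Let `B ≥ 0` and for each `n ≥ 1` let `P n` be the spectral projection `E([1/n, ∞))` of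
`B`: an orthogonal projection commuting with `B` with `(1/n)·P n ≤ B·P n` and
`B·(1 - P n) ≤ (1/n)·(1 - P n)`. Then `B ∈ 𝓛₊(A)` iff `P n ∈ 𝓛₊(A)` for all `n ≥ 1`. -/
theorem mem_closure_Lplus_iff_spectral_projections (A B : H →L[ℂ] H)
    (hA : A.IsPositive) (hB : B.IsPositive)
    (P : ℕ → (H →L[ℂ] H))
    (hsa : ∀ n, 1 ≤ n → IsSelfAdjoint (P n))
    (hidem : ∀ n, 1 ≤ n → (P n) ∘L (P n) = P n)
    (hcomm : ∀ n, 1 ≤ n → B ∘L P n = P n ∘L B)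
    (hlow : ∀ n, 1 ≤ n → (B ∘L P n - ((n : ℝ)⁻¹) • P n).IsPositive)
    (hhigh : ∀ n, 1 ≤ n → (((n : ℝ)⁻¹) • (1 - P n) - B ∘L (1 - P n)).IsPositive) :
    B ∈ closure (Lplus A) ↔ ∀ n, 1 ≤ n → P n ∈ closure (Lplus A) :=
  mem_closure_Lplus_iff_spectral_projections_general A B hB P hsa hidem hcomm hlow hhigh
end

section
/- Let A ∈ B₊(H) be compact and B ∈ B₊(H) compact with R(B) ⊆ closure R(A). Then B ∈ 𝓛₊(A), the norm closure of the positive operators dominated by a positive multiple of A. Consequently 𝓛₊(A) for compact positive A equals the set of all compact positive B with R(B) ⊆ closure R(A). -/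
variable {H : Type*} [NormedAddCommGroup H] [InnerProductSpace ℂ H] [CompleteSpace H]

open ContinuousLinearMap RCLike Set InnerProductSpace
open scoped InnerProductSpace

/-!
If `0 ≤ X ≤ c • A`, then `X * X ≤ ‖X‖ • X ≤ (‖X‖ * c) • A`, so `‖X u‖ ^ 2 ≤ C * ‖A u‖ * ‖u‖`.
This makes `X` compact when `A` is, and gives `ker A ≤ ker X`, i.e. `R(X) ≤ closure R(A)`.
All three properties are closed, which gives the inclusion `closure (Lplus A) ⊆ _`.

Conversely, a compact `B ≥ 0` is close to `P * B * P`, where `P` projects onto the span of a finite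
net of `B '' closedBall 0 1`, a subspace of `closure R(A)`. Having finite rank and range in
`closure R(A)`, `P` is a limit of operators `A * R`, and `(A * R) * B * star (A * R) = A * (R * B * star R) * A ∈ Lplus A`.
-/

lemma CStarAlgebra.mul_self_le_norm_smul {A : Type*} [NonUnitalCStarAlgebra A] [PartialOrder A]
    [StarOrderedRing A] {a : A} (ha : 0 ≤ a) : a * a ≤ ‖a‖ • a := by
  set s := CFC.sqrt a
  have hs : star s = s := (CFC.sqrt_nonneg a).isSelfAdjoint.star_eq
  calc a * a = star s * a * s := by
        rw [hs, ← CFC.sqrt_mul_sqrt_self a ha]; simp only [s, mul_assoc]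
    _ ≤ ‖a‖ • (star s * s) := star_left_conjugate_le_norm_smul
    _ = ‖a‖ • a := by rw [hs, CFC.sqrt_mul_sqrt_self a ha]

lemma norm_sub_mul_mul_le {R : Type*} [NonUnitalNormedRing R] [StarRing R] [NormedStarGroup R]
    {a p : R} (ha : IsSelfAdjoint a) (hp : IsSelfAdjoint p) (hp1 : ‖p‖ ≤ 1) :
    ‖a - p * a * p‖ ≤ 2 * ‖a - p * a‖ := by
  have h : a - p * a * p = (a - p * a) + p * star (a - p * a) := by
    rw [star_sub, star_mul, ha.star_eq, hp.star_eq]; noncomm_ring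
  calc ‖a - p * a * p‖ ≤ ‖a - p * a‖ + ‖p‖ * ‖star (a - p * a)‖ := by
        rw [h]; exact (norm_add_le _ _).trans (by gcongr; exact norm_mul_le _ _)
    _ ≤ 2 * ‖a - p * a‖ := by
        rw [norm_star]; nlinarith [norm_nonneg (a - p * a)]

lemma TotallyBounded.image_of_forall_dist_lt {α β γ : Type*} [PseudoMetricSpace β]
    [PseudoMetricSpace γ] {f : α → β} {g : α → γ} {s : Set α} (hf : TotallyBounded (f '' s))
    (hfg : ∀ ε > 0, ∃ δ > 0, ∀ x ∈ s, ∀ y ∈ s, dist (f x) (f y) < δ → dist (g x) (g y) < ε) :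
    TotallyBounded (g '' s) := by
  rw [Metric.totallyBounded_iff]
  intro ε hε
  obtain ⟨δ, hδ, hfgδ⟩ := hfg ε hε
  obtain ⟨t, hts, htfin, hcover⟩ := exists_subset_image_finite_and.1
    (Metric.finite_approx_of_totallyBounded hf δ hδ)
  refine ⟨g '' t, htfin.image g, ?_⟩
  rintro _ ⟨x, hx, rfl⟩
  obtain ⟨_, ⟨y, hy, rfl⟩, hxy⟩ := mem_iUnion₂.1 (hcover ⟨x, hx, rfl⟩)
  exact mem_iUnion₂.2 ⟨g y, mem_image_of_mem g hy, hfgδ x hx y (hts hy) hxy⟩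

lemma IsCompactOperator.of_norm_sq_le {𝕜 E F G : Type*} [NontriviallyNormedField 𝕜]
    [NormedAddCommGroup E] [NormedAddCommGroup F] [NormedAddCommGroup G] [NormedSpace 𝕜 E]
    [NormedSpace 𝕜 F] [NormedSpace 𝕜 G] [CompleteSpace G] {A : E →L[𝕜] F} {X : E →L[𝕜] G}
    (hA : IsCompactOperator A) {C : ℝ} (hC : 0 ≤ C) (h : ∀ u, ‖X u‖ ^ 2 ≤ C * (‖A u‖ * ‖u‖)) :
    IsCompactOperator X := by
  refine (isCompactOperator_iff_isCompact_closure_image_ball (X : E →ₗ[𝕜] G) one_pos).2 ?_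
  refine (TotallyBounded.closure ?_).isCompact_of_isClosed isClosed_closure
  have hAball := (hA.isCompact_closure_image_ball 1).totallyBounded.subset subset_closure
  refine hAball.image_of_forall_dist_lt fun ε hε =>
    ⟨ε ^ 2 / (2 * C + 1), by positivity, fun x hx y hy hxy => ?_⟩
  rw [mem_ball_zero_iff] at hx hy
  rw [dist_eq_norm, ContinuousLinearMap.coe_coe] at hxy
  rw [dist_eq_norm]
  have hxy2 : ‖x - y‖ ≤ 2 := (norm_sub_le x y).trans (by linarith)
  refine lt_of_pow_lt_pow_left₀ 2 hε.le ?_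
  calc ‖X x - X y‖ ^ 2 ≤ C * (‖A x - A y‖ * ‖x - y‖) := by simpa only [map_sub] using h (x - y)
    _ ≤ C * (ε ^ 2 / (2 * C + 1) * 2) := by gcongr
    _ = ε ^ 2 * (2 * C / (2 * C + 1)) := by ring
    _ < ε ^ 2 :=
        mul_lt_of_lt_one_right (by positivity) ((div_lt_one (by positivity)).2 (by linarith))

lemma isClosed_setOf_range_le {𝕜 E F : Type*} [NormedField 𝕜] [SeminormedAddCommGroup E]
    [NormedSpace 𝕜 E] [SeminormedAddCommGroup F] [NormedSpace 𝕜 F] {V : Submodule 𝕜 F}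
    (hV : IsClosed (V : Set F)) :
    IsClosed {B : E →L[𝕜] F | LinearMap.range (B : E →ₗ[𝕜] F) ≤ V} := by
  have h : {B : E →L[𝕜] F | LinearMap.range (B : E →ₗ[𝕜] F) ≤ V} =
      ⋂ x, (fun B => B x) ⁻¹' V := by
    ext B
    simp [LinearMap.range_le_iff_comap, Submodule.eq_top_iff']
  rw [h]
  exact isClosed_iInter fun x => hV.preimage (continuous_eval_const x)

lemma ContinuousLinearMap.re_inner_le_of_le {𝕜 E : Type*} [RCLike 𝕜] [NormedAddCommGroup E]
    [InnerProductSpace 𝕜 E] {S T : E →L[𝕜] E} (h : S ≤ T) (x : E) :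
    re ⟪S x, x⟫_𝕜 ≤ re ⟪T x, x⟫_𝕜 := by
  simpa [inner_sub_left] using h.re_inner_nonneg_left x

lemma Submodule.norm_sub_starProjection_apply_le {𝕜 E : Type*} [RCLike 𝕜] [NormedAddCommGroup E]
    [InnerProductSpace 𝕜 E] (U : Submodule 𝕜 E) [U.HasOrthogonalProjection] (v : E) {w : E}
    (hw : w ∈ U) : ‖v - U.starProjection v‖ ≤ ‖v - w‖ := by
  rw [starProjection_minimal]
  exact ciInf_le ⟨0, forall_mem_range.2 fun _ => norm_nonneg _⟩ (⟨w, hw⟩ : U)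

lemma IsCompactOperator.exists_norm_sub_starProjection_comp_lt {𝕜 E F : Type*} [RCLike 𝕜]
    [NormedAddCommGroup E] [NormedSpace 𝕜 E] [NormedAddCommGroup F] [InnerProductSpace 𝕜 F]
    {B : E →L[𝕜] F} (hB : IsCompactOperator B) {ε : ℝ} (hε : 0 < ε) :
    ∃ W : Submodule 𝕜 F, ∃ _ : FiniteDimensional 𝕜 W, W ≤ LinearMap.range (B : E →ₗ[𝕜] F) ∧
      ‖B - W.starProjection ∘L B‖ < ε := by
  obtain ⟨t, htB, htfin, hcover⟩ := Metric.finite_approx_of_totallyBounded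
    ((hB.isCompact_closure_image_closedBall 1).totallyBounded.subset subset_closure) (ε / 2)
    (half_pos hε)
  have : FiniteDimensional 𝕜 (Submodule.span 𝕜 t) := .span_of_finite 𝕜 htfin
  refine ⟨Submodule.span 𝕜 t, this, Submodule.span_le.2 (htB.trans (image_subset_range _ _)), ?_⟩
  refine (opNorm_le_of_unit_norm (half_pos hε).le fun x hx => ?_).trans_lt (half_lt_self hε)
  obtain ⟨y, hy, hxy⟩ := mem_iUnion₂.1 (hcover ⟨x, by simp [hx], rfl⟩)
  calc ‖B x - (Submodule.span 𝕜 t).starProjection (B x)‖ ≤ ‖B x - y‖ :=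
        Submodule.norm_sub_starProjection_apply_le _ _ (Submodule.subset_span hy)
    _ ≤ ε / 2 := (mem_ball_iff_norm.1 hxy).le

lemma Submodule.starProjection_mem_closure_range_comp {𝕜 F G : Type*} [RCLike 𝕜]
    [NormedAddCommGroup F] [InnerProductSpace 𝕜 F] [NormedAddCommGroup G] [NormedSpace 𝕜 G]
    {A : G →L[𝕜] F} {W : Submodule 𝕜 F} [FiniteDimensional 𝕜 W]
    (hW : W ≤ (LinearMap.range (A : G →ₗ[𝕜] F)).topologicalClosure) :
    W.starProjection ∈ closure (range fun R : F →L[𝕜] G => A ∘L R) := by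
  let b := stdOrthonormalBasis 𝕜 W
  have hb : (fun i => (b i : F)) ∈ closure (univ.pi fun _ => range A) := by
    rw [closure_pi_set]
    exact fun i _ => hW (b i).2
  have hcont : Continuous fun v : _ → F => ∑ i, rankOne 𝕜 (v i) (b i : F) := by
    fun_prop
  rw [b.starProjection_eq_sum_rankOne]
  refine map_mem_closure (x := fun i => (b i : F)) hcont hb ?_
  intro v hv
  choose u hu using fun i => hv i (mem_univ i)
  exact ⟨∑ i, rankOne 𝕜 (u i) (b i : F), by simp [comp_finsetSum, comp_rankOne, hu]⟩

omit [CompleteSpace H] in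
lemma mem_Lplus_iff {A B : H →L[ℂ] H} : B ∈ Lplus A ↔ 0 ≤ B ∧ ∃ c : ℝ, 0 < c ∧ B ≤ c • A := by
  simp only [Lplus, mem_ofPred_eq, le_def, sub_zero]

lemma norm_apply_sq_le_of_mem_Lplus {A X : H →L[ℂ] H} (hX : X ∈ Lplus A) :
    ∃ C, 0 ≤ C ∧ ∀ u, ‖X u‖ ^ 2 ≤ C * (‖A u‖ * ‖u‖) := by
  obtain ⟨hX0, c, hc, hXA⟩ := mem_Lplus_iff.1 hX
  have hXX : X * X ≤ (‖X‖ * c) • A := by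
    rw [mul_smul]
    exact (CStarAlgebra.mul_self_le_norm_smul hX0).trans
      (smul_le_smul_of_nonneg_left hXA (norm_nonneg X))
  refine ⟨‖X‖ * c, by positivity, fun u => ?_⟩
  calc ‖X u‖ ^ 2 = re ⟪X (X u), u⟫_ℂ := by
        rw [((nonneg_iff_isPositive X).1 hX0).inner_left_eq_inner_right,
          inner_self_eq_norm_sq]
    _ ≤ re ⟪((‖X‖ * c) • A) u, u⟫_ℂ := re_inner_le_of_le hXX u
    _ = (‖X‖ * c) * re ⟪A u, u⟫_ℂ := by simp
    _ ≤ (‖X‖ * c) * (‖A u‖ * ‖u‖) := by gcongr; exact re_inner_le_norm _ _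

lemma range_le_topologicalClosure_range_of_mem_Lplus {A X : H →L[ℂ] H} (hA : IsSelfAdjoint A)
    (hX : X ∈ Lplus A) :
    LinearMap.range (X : H →ₗ[ℂ] H) ≤ (LinearMap.range (A : H →ₗ[ℂ] H)).topologicalClosure := by
  obtain ⟨C, -, hC⟩ := norm_apply_sq_le_of_mem_Lplus hX
  rw [← Submodule.orthogonal_orthogonal_eq_closure, orthogonal_range, ← star_eq_adjoint,
    hA.star_eq]
  rintro _ ⟨y, rfl⟩
  rw [Submodule.mem_orthogonal]
  intro u hu
  have hXu : X u = 0 := by simpa [show A u = 0 from hu] using hC u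
  change ⟪u, X y⟫_ℂ = 0
  rw [← ((nonneg_iff_isPositive X).1 (mem_Lplus_iff.1 hX).1).inner_left_eq_inner_right, hXu,
    inner_zero_left]

lemma mul_mul_mem_Lplus {A Y : H →L[ℂ] H} (hA : 0 ≤ A) (hY : 0 ≤ Y) : A * Y * A ∈ Lplus A := by
  have hAA : star A = A := hA.isSelfAdjoint.star_eq
  have hAYA : 0 ≤ A * Y * A := by simpa only [hAA] using star_left_conjugate_nonneg hY A
  refine mem_Lplus_iff.2 ⟨hAYA, ‖Y‖ * ‖A‖ + 1, by positivity, ?_⟩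
  calc A * Y * A = star A * Y * A := by rw [hAA]
    _ ≤ ‖Y‖ • (star A * A) := CStarAlgebra.star_left_conjugate_le_norm_smul
    _ ≤ ‖Y‖ • (‖A‖ • A) := by
        rw [hAA]
        exact smul_le_smul_of_nonneg_left (CStarAlgebra.mul_self_le_norm_smul hA) (norm_nonneg Y)
    _ ≤ (‖Y‖ * ‖A‖ + 1) • A := by
        rw [add_smul, one_smul, mul_smul]; exact le_add_of_nonneg_right hA

lemma mul_mul_star_mem_closure_Lplus {A B P : H →L[ℂ] H} (hA : 0 ≤ A) (hB : 0 ≤ B)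
    (hP : P ∈ closure (range (A * ·))) : P * B * star P ∈ closure (Lplus A) := by
  refine map_mem_closure (f := fun T => T * B * star T) (by fun_prop) hP ?_
  rintro _ ⟨R, rfl⟩
  simpa only [star_mul, hA.isSelfAdjoint.star_eq, mul_assoc] using
    mul_mul_mem_Lplus hA (star_right_conjugate_nonneg hB R)

lemma mem_closure_Lplus_of_isCompactOperator {A B : H →L[ℂ] H} (hA : 0 ≤ A) (hB : 0 ≤ B)
    (hBc : IsCompactOperator B)
    (hBA : LinearMap.range (B : H →ₗ[ℂ] H) ≤ (LinearMap.range (A : H →ₗ[ℂ] H)).topologicalClosure) :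
    B ∈ closure (Lplus A) := by
  rw [← closure_closure (s := Lplus A), Metric.mem_closure_iff]
  intro ε hε
  obtain ⟨W, _, hWB, hBW⟩ := hBc.exists_norm_sub_starProjection_comp_lt (half_pos hε)
  have hP := (isSelfAdjoint_starProjection W).star_eq
  refine ⟨_, mul_mul_star_mem_closure_Lplus hA hB
    (Submodule.starProjection_mem_closure_range_comp (hWB.trans hBA)), ?_⟩
  rw [dist_eq_norm, hP]
  calc ‖B - W.starProjection * B * W.starProjection‖ ≤ 2 * ‖B - W.starProjection * B‖ :=
        norm_sub_mul_mul_le hB.isSelfAdjoint (isSelfAdjoint_starProjection W)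
          W.starProjection_norm_le
    _ < ε := by linarith [show ‖B - W.starProjection * B‖ < ε / 2 from hBW]

/-- If `A ≥ 0` is compact and `B ≥ 0` is compact with `R(B) ⊆ closure R(A)`, then
`B ∈ 𝓛₊(A)`; consequently, for compact positive `A`, `𝓛₊(A)` is exactly the set of all
compact positive operators whose range is contained in the closure of the range of `A`. -/
theorem closure_Lplus_of_compact (A : H →L[ℂ] H) (hA : A.IsPositive)
    (hAc : IsCompactOperator ⇑A) :
    (∀ B : H →L[ℂ] H, B.IsPositive → IsCompactOperator ⇑B →
      LinearMap.range (B : H →ₗ[ℂ] H) ≤ (LinearMap.range (A : H →ₗ[ℂ] H)).topologicalClosure →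
      B ∈ closure (Lplus A)) ∧
    closure (Lplus A) = {B : H →L[ℂ] H | B.IsPositive ∧ IsCompactOperator ⇑B ∧
      LinearMap.range (B : H →ₗ[ℂ] H) ≤ (LinearMap.range (A : H →ₗ[ℂ] H)).topologicalClosure} := by
  have hmem (B : H →L[ℂ] H) (hB : B.IsPositive) :=
    mem_closure_Lplus_of_isCompactOperator ((nonneg_iff_isPositive A).2 hA)
      ((nonneg_iff_isPositive B).2 hB)
  refine ⟨hmem, (closure_minimal ?_ ?_).antisymm fun B ⟨hB, hBc, hBA⟩ => hmem B hB hBc hBA⟩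
  · intro X hX
    obtain ⟨C, hC, hXA⟩ := norm_apply_sq_le_of_mem_Lplus hX
    exact ⟨hX.1, hAc.of_norm_sq_le hC hXA,
      range_le_topologicalClosure_range_of_mem_Lplus hA.isSelfAdjoint hX⟩
  · have hpos : {B : H →L[ℂ] H | B.IsPositive} = {B | 0 ≤ B} := by simp [nonneg_iff_isPositive]
    exact (hpos ▸ CStarAlgebra.isClosed_nonneg).inter (isClosed_setOfPred_isCompactOperator.inter
      (isClosed_setOf_range_le (Submodule.isClosed_topologicalClosure _)))
end
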